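/- Let 0 < a < b and y > 0. Define c = (b-a)/(b-a+y·ln(b/a)), α = ln c + 1, β = -c. Then B(b,y)/B(a,y) ≥ e^((α+β)(b-a)) · (b/a)^(yβ-1) · ((b+y)/(a+y)). -/

import Mathlib

/-!
By `B(x, y) = Γ(x) Γ(y) / Γ(x + y)` and Euler's limit formula, `log B(b, y) - log B(a, y)` is the
limit of `D_n(b) - D_n(a)`, where `D_n(x) = log Γ_n(x) - log Γ_n(x + y)` is built from the
partial products `Γ_n`, so that `D_n'(x) = -∑_{m ≤ n} (1/(x + m) - 1/(x + y + m))`.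
Since `∑_{m ≥ 1} 1/(s + m)² ≤ 1/s` by telescoping, `s ↦ log s + ∑_{1 ≤ m ≤ n} 1/(s + m)` is
increasing, which bounds `-D_n'(x)` by `1/x - 1/(x + y) + log(1 + y/x)`; and the concave function
`t ↦ log(1 + y t)` lies below its tangent at `t = 1/L`, where `L = (b - a) / log(b/a)` is the
logarithmic mean of `a` and `b`. So `D_n` plus an explicit antiderivative of this bound is
increasing. Comparing its values at `a` and `b`, the linear part of the tangent contributes nothing
because `log b - log a = (b - a)/L`; what remains is the exponent of the left-hand side, since
`c = L / (L + y)`.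
-/

open Real MeasureTheory intervalIntegral

noncomputable def B (x y : ℝ) : ℝ := ∫ t in (0:ℝ)..1, t ^ (x - 1) * (1 - t) ^ (y - 1)

open Finset Filter Topology BohrMollerup

lemma B_eq_Gamma_mul_Gamma_div {x y : ℝ} (hx : 0 < x) (hy : 0 < y) :
    B x y = Gamma x * Gamma y / Gamma (x + y) := by
  have hB : (B x y : ℂ) = Complex.betaIntegral x y := by
    rw [B, ← intervalIntegral.integral_ofReal, Complex.betaIntegral]
    refine intervalIntegral.integral_congr fun t ht => ?_
    rw [Set.uIcc_of_le zero_le_one] at ht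
    push_cast
    rw [Complex.ofReal_cpow ht.1, Complex.ofReal_cpow (sub_nonneg.2 ht.2)]
    push_cast
    ring
  rw [Complex.betaIntegral_eq_Gamma_mul_div _ _ (by simpa) (by simpa), ← Complex.ofReal_add,
    Complex.Gamma_ofReal, Complex.Gamma_ofReal, Complex.Gamma_ofReal] at hB
  exact_mod_cast hB

lemma B_pos {x y : ℝ} (hx : 0 < x) (hy : 0 < y) : 0 < B x y := by
  rw [B_eq_Gamma_mul_Gamma_div hx hy]
  have := Gamma_pos_of_pos (add_pos hx hy)
  positivity

lemma sum_inv_sq_le_inv {s : ℝ} (hs : 0 < s) (n : ℕ) :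
    ∑ m ∈ range n, ((s + (m + 1)) ^ 2)⁻¹ ≤ s⁻¹ :=
  calc ∑ m ∈ range n, ((s + (m + 1)) ^ 2)⁻¹
      ≤ ∑ m ∈ range n, ((s + m)⁻¹ - (s + (m + 1 : ℕ))⁻¹) := by
        refine sum_le_sum fun m _ => ?_
        have : 0 < s + m := by positivity
        rw [Nat.cast_succ, inv_sub_inv (by positivity) (by positivity),
          show s + (m + 1) - (s + m) = 1 by ring, one_div]
        apply inv_anti₀ (by positivity)
        nlinarith
    _ = s⁻¹ - (s + n)⁻¹ := by rw [sum_range_sub' (fun m : ℕ => (s + m)⁻¹)]; simp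
    _ ≤ s⁻¹ := sub_le_self _ (inv_nonneg.2 (by positivity))

lemma monotoneOn_Ioi_of_hasDerivAt_nonneg {f f' : ℝ → ℝ} {a : ℝ}
    (hf : ∀ x ∈ Set.Ioi a, HasDerivAt f (f' x) x) (hf' : ∀ x ∈ Set.Ioi a, 0 ≤ f' x) :
    MonotoneOn f (Set.Ioi a) := by
  refine monotoneOn_of_hasDerivWithinAt_nonneg (f' := f') (convex_Ioi a)
    (fun x hx => (hf x hx).continuousAt.continuousWithinAt) ?_ ?_ <;> rw [interior_Ioi]
  exacts [fun x hx => (hf x hx).hasDerivWithinAt, hf']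

lemma monotoneOn_log_add_sum_inv (n : ℕ) :
    MonotoneOn (fun s => log s + ∑ m ∈ range n, (s + (m + 1))⁻¹) (Set.Ioi 0) := by
  refine monotoneOn_Ioi_of_hasDerivAt_nonneg
    (f' := fun s => s⁻¹ - ∑ m ∈ range n, ((s + (m + 1)) ^ 2)⁻¹) (fun s hs => ?_)
    (fun s hs => sub_nonneg.2 (sum_inv_sq_le_inv hs n))
  rw [Set.mem_Ioi] at hs
  refine ((hasDerivAt_log hs.ne').fun_add (HasDerivAt.fun_sum (u := range n) fun m _ =>
    ((hasDerivAt_id' s).add_const ((m : ℝ) + 1)).fun_inv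
      (by positivity : s + ((m : ℝ) + 1) ≠ 0))).congr_deriv ?_
  simp [sub_eq_add_neg, div_eq_mul_inv]

lemma sum_inv_sub_inv_le_log_sub_log {x y : ℝ} (hx : 0 < x) (hy : 0 ≤ y) (n : ℕ) :
    ∑ m ∈ range n, ((x + (m + 1))⁻¹ - (x + y + (m + 1))⁻¹) ≤ log (x + y) - log x := by
  have := monotoneOn_log_add_sum_inv n hx (show 0 < x + y by linarith) (by linarith)
  simp only [sum_sub_distrib] at this ⊢
  linarith

-- The right-hand side is the tangent line at `t = L⁻¹` of the concave function `t ↦ log (1 + y t)`.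
lemma log_add_sub_log_le_tangent {x y L : ℝ} (hx : 0 < x) (hy : 0 ≤ y) (hL : 0 < L) :
    log (x + y) - log x ≤ log (L + y) - log L + y * L / (L + y) * (x⁻¹ - L⁻¹) := by
  have key := log_le_sub_one_of_pos (x := (x + y) * L / ((L + y) * x)) (by positivity)
  rw [log_div (by positivity) (by positivity), log_mul (by positivity) hL.ne',
    log_mul (by positivity) hx.ne'] at key
  have : (x + y) * L / ((L + y) * x) - 1 = y * L / (L + y) * (x⁻¹ - L⁻¹) := by
    field_simp
    ring
  linarith

lemma hasDerivAt_logGammaSeq {x : ℝ} (hx : 0 < x) (n : ℕ) :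
    HasDerivAt (logGammaSeq · n) (log n - ∑ m ∈ range (n + 1), (x + m)⁻¹) x := by
  refine ((((hasDerivAt_id' x).mul_const (log n)).add_const _).fun_sub
    (HasDerivAt.fun_sum (u := range (n + 1)) fun m _ =>
      ((hasDerivAt_id' x).add_const (m : ℝ)).log (by positivity))).congr_deriv ?_
  simp [div_eq_mul_inv]

lemma tendsto_logGammaSeq_sub_logGammaSeq_add {x y : ℝ} (hx : 0 < x) (hy : 0 < y) :
    Tendsto (fun n => logGammaSeq x n - logGammaSeq (x + y) n) atTop
      (𝓝 (log (B x y) - log (Gamma y))) := by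
  have hxy : 0 < x + y := by linarith
  convert (tendsto_log_gamma hx).sub (tendsto_log_gamma hxy) using 2
  rw [B_eq_Gamma_mul_Gamma_div hx hy, log_div (by positivity) (Gamma_pos_of_pos hxy).ne',
    log_mul (Gamma_pos_of_pos hx).ne' (Gamma_pos_of_pos hy).ne']
  ring

lemma monotoneOn_logGammaSeq_sub_add_tangent {y L : ℝ} (hy : 0 ≤ y) (hL : 0 < L) (n : ℕ) :
    MonotoneOn (fun x => logGammaSeq x n - logGammaSeq (x + y) n + (log x - log (x + y))
      + x * (log (L + y) - log L) + y * L / (L + y) * (log x - x / L)) (Set.Ioi 0) := by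
  refine monotoneOn_Ioi_of_hasDerivAt_nonneg (f' := fun x =>
    (log n - ∑ m ∈ range (n + 1), (x + m)⁻¹) - (log n - ∑ m ∈ range (n + 1), (x + y + m)⁻¹)
      + (x⁻¹ - 1 / (x + y)) + 1 * (log (L + y) - log L) + y * L / (L + y) * (x⁻¹ - 1 / L))
    (fun x hx => ?_) (fun x hx => ?_)
  · rw [Set.mem_Ioi] at hx
    have hxy : 0 < x + y := by linarith
    exact ((((hasDerivAt_logGammaSeq hx n).fun_sub
      ((hasDerivAt_logGammaSeq hxy n).comp_add_const x y)).fun_add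
      ((hasDerivAt_log hx.ne').fun_sub (((hasDerivAt_id' x).add_const y).log hxy.ne'))).fun_add
      ((hasDerivAt_id' x).mul_const _)).fun_add
      (((hasDerivAt_log hx.ne').fun_sub ((hasDerivAt_id' x).div_const L)).const_mul _)
  · rw [Set.mem_Ioi] at hx
    have hsum := sum_inv_sub_inv_le_log_sub_log hx hy n
    have htangent := log_add_sub_log_le_tangent hx hy hL
    have hsplit : ∑ m ∈ range (n + 1), (x + m)⁻¹ - ∑ m ∈ range (n + 1), (x + y + m)⁻¹ =
        ∑ m ∈ range n, ((x + (m + 1))⁻¹ - (x + y + (m + 1))⁻¹) + (x⁻¹ - (x + y)⁻¹) := by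
      rw [← sum_sub_distrib, sum_range_succ']
      push_cast
      simp
    simp only [one_div, one_mul]
    linarith

lemma le_log_B_sub_log_B {a b y L : ℝ} (ha : 0 < a) (hab : a ≤ b) (hy : 0 < y) (hL : 0 < L)
    (hL_mean : b / L - a / L = log b - log a) :
    log a - log b + (log (b + y) - log (a + y)) - (b - a) * (log (L + y) - log L) ≤
      log (B b y) - log (B a y) := by
  have hb : 0 < b := ha.trans_le hab
  have hlim := (tendsto_logGammaSeq_sub_logGammaSeq_add hb hy).sub
    (tendsto_logGammaSeq_sub_logGammaSeq_add ha hy)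
  rw [sub_sub_sub_cancel_right] at hlim
  refine le_of_tendsto_of_tendsto' tendsto_const_nhds hlim fun n => ?_
  have hmono := monotoneOn_logGammaSeq_sub_add_tangent hy.le hL n ha hb hab
  have hW : log b - b / L = log a - a / L := by linarith
  simp only [hW] at hmono
  linear_combination hmono

theorem stmt9 (a b y : ℝ) (ha : 0 < a) (hab : a < b) (hy : 0 < y)
    (c α β : ℝ)
    (hc : c = (b - a) / (b - a + y * Real.log (b / a)))
    (hα : α = Real.log c + 1) (hβ : β = -c) :
    Real.exp ((α + β) * (b - a)) * (b / a) ^ (y * β - 1) * ((b + y) / (a + y)) ≤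
      B b y / B a y := by
  have hb : 0 < b := ha.trans hab
  have hℓ : 0 < log b - log a := sub_pos.2 (log_lt_log ha hab)
  rw [log_div hb.ne' ha.ne'] at hc
  set L := (b - a) / (log b - log a) with hL_def
  have hL : 0 < L := div_pos (sub_pos.2 hab) hℓ
  have hL_mean : b / L - a / L = log b - log a := by
    rw [← sub_div, hL_def, div_div_cancel₀ (sub_pos.2 hab).ne']
  have hc_eq : c * (b - a + y * (log b - log a)) = b - a := by
    rw [hc, div_mul_cancel₀ _ (add_pos (sub_pos.2 hab) (mul_pos hy hℓ)).ne']
  have hlog_c : log c = log L - log (L + y) := by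
    rw [← log_div hL.ne' (by linarith), hc, hL_def]
    congr 1
    field_simp
  calc exp ((α + β) * (b - a)) * (b / a) ^ (y * β - 1) * ((b + y) / (a + y))
      = exp ((b - a) * log c - (log b - log a) + (log (b + y) - log (a + y))) := by
        rw [rpow_def_of_pos (div_pos hb ha), log_div hb.ne' ha.ne',
          ← exp_log (div_pos (by linarith : 0 < b + y) (by linarith : 0 < a + y)),
          log_div (by linarith) (by linarith), ← exp_add, ← exp_add, hα, hβ]
        congr 1
        linear_combination -hc_eq
    _ ≤ exp (log (B b y) - log (B a y)) := by
        refine exp_le_exp.2 (le_trans (le_of_eq ?_) (le_log_B_sub_log_B ha hab.le hy hL hL_mean))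
        rw [hlog_c]
        ring
    _ = B b y / B a y := by rw [exp_sub, exp_log (B_pos hb hy), exp_log (B_pos ha hy)]
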